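/- arXiv:1510.08399 — 2 statements merged into one kernel-verified Lean document; each statement's English description precedes it below -/
import Mathlib

section
/- The pseudo-spherical Gauss map ν̃ = r ∧ e₁ ∧ e₂ of the pseudo-Riemannian Clifford torus r(u,v) = (1/√2)(0, cos u, sin u, cosh v, sinh v) in S^4_1(1) ⊂ E^5_1 satisfies Δν̃ = 2ν̃, where Δ is the Laplace operator of the induced flat Lorentzian metric (∂²/∂u² − ∂²/∂v² up to the conformal factor) acting componentwise on the Λ^3(E^5_1)-valued map. -/
/-- The pseudo-Riemannian Clifford torus `r(u,v) = (1/√2)(0, cos u, sin u, cosh v, sinh v)`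
in `S⁴₁(1) ⊂ E⁵₁`. -/
noncomputable def prCliff (u v : ℝ) : Fin 5 → ℝ :=
  (Real.sqrt 2)⁻¹ • ![0, Real.cos u, Real.sin u, Real.cosh v, Real.sinh v]

noncomputable def prCliffU (u v : ℝ) : Fin 5 → ℝ := deriv (fun t => prCliff t v) u
noncomputable def prCliffV (u v : ℝ) : Fin 5 → ℝ := deriv (fun t => prCliff u t) v

/-- The (Plücker components of the) pseudo-spherical Gauss map `ν̃ = r ∧ e₁ ∧ e₂` of the
pseudo-Riemannian Clifford torus, with `e₁ = √2 r_u` (spacelike, `⟨e₁,e₁⟩ = 1`) and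
`e₂ = √2 r_v` (timelike, `⟨e₂,e₂⟩ = −1`), so that `ν̃ = 2 r ∧ r_u ∧ r_v`. -/
noncomputable def prCliffGaussMap (u v : ℝ) (i j k : Fin 5) : ℝ :=
  2 * Matrix.det (Matrix.of
      ![![prCliff u v i, prCliff u v j, prCliff u v k],
        ![prCliffU u v i, prCliffU u v j, prCliffU u v k],
        ![prCliffV u v i, prCliffV u v j, prCliffV u v k]])

/-!
Write `√2 r = a(u) + b(v)` with `a = (0, cos u, sin u, 0, 0)` on a circle and
`b = (0, 0, 0, cosh v, sinh v)` on a hyperbola. Since `a ∧ a' = E₁ ∧ E₂` and `b ∧ b' = E₃ ∧ E₄`,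
`ν̃ = (1/√2) (E₁ ∧ E₂ ∧ b'(v) + E₄ ∧ E₃ ∧ a'(u))`: every Plücker coordinate of `ν̃` has the form
`A sinh v + B cosh v + C sin u + D cos u`, and `-2 ∂²/∂u² + 2 ∂²/∂v²` acts on such functions as
multiplication by `2`.
-/

open Real

section Wedge

variable {ι : Type*}

/-- The Plücker coordinate `(x ∧ y ∧ z)_{ijk}`. -/
noncomputable def wedge3 (x y z : ι → ℝ) (i j k : ι) : ℝ :=
  Matrix.det (Matrix.of ![![x i, x j, x k], ![y i, y j, y k], ![z i, z j, z k]])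

lemma wedge3_smul (a b c : ℝ) (x y z : ι → ℝ) (i j k : ι) :
    wedge3 (a • x) (b • y) (c • z) i j k = a * b * c * wedge3 x y z i j k := by
  simp only [wedge3, Matrix.det_fin_three, Matrix.of_apply, Matrix.cons_val', Matrix.cons_val_zero,
    Matrix.cons_val_fin_one, Matrix.cons_val_one, Matrix.cons_val, Pi.smul_apply, smul_eq_mul]
  ring

lemma wedge3_clifford_frame (x₁ x₂ x₃ x₄ : ι → ℝ) (u v : ℝ) (i j k : ι) :
    wedge3 (cos u • x₁ + sin u • x₂ + (cosh v • x₃ + sinh v • x₄)) (-sin u • x₁ + cos u • x₂)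
        (sinh v • x₃ + cosh v • x₄) i j k =
      sinh v * wedge3 x₁ x₂ x₃ i j k + cosh v * wedge3 x₁ x₂ x₄ i j k
        + (sin u * wedge3 x₃ x₄ x₁ i j k + cos u * wedge3 x₄ x₃ x₂ i j k) := by
  linear_combination (norm := skip)
    (sinh v * wedge3 x₁ x₂ x₃ i j k + cosh v * wedge3 x₁ x₂ x₄ i j k) * sin_sq_add_cos_sq u
      + (sin u * wedge3 x₃ x₄ x₁ i j k + cos u * wedge3 x₄ x₃ x₂ i j k) * cosh_sq_sub_sinh_sq v
  simp only [wedge3, Matrix.det_fin_three, Matrix.of_apply, Matrix.cons_val', Matrix.cons_val_zero,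
    Matrix.cons_val_fin_one, Matrix.cons_val_one, Matrix.cons_val, Pi.add_apply, Pi.smul_apply,
    smul_eq_mul]
  ring

end Wedge

lemma deriv_deriv_const_add_sin_cos (a b c u : ℝ) :
    deriv (deriv fun s => a + (b * sin s + c * cos s)) u = -(b * sin u + c * cos u) := by
  have h1 (s : ℝ) : HasDerivAt (fun s => a + (b * sin s + c * cos s)) (b * cos s - c * sin s) s :=
    ((((hasDerivAt_sin s).const_mul b).add ((hasDerivAt_cos s).const_mul c)).const_add
      a).congr_deriv (by ring)
  have h2 : HasDerivAt (fun s => b * cos s - c * sin s) (-(b * sin u + c * cos u)) u :=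
    (((hasDerivAt_cos u).const_mul b).sub ((hasDerivAt_sin u).const_mul c)).congr_deriv (by ring)
  rw [funext fun s => (h1 s).deriv, h2.deriv]

lemma deriv_deriv_sinh_cosh_add_const (a b c v : ℝ) :
    deriv (deriv fun s => b * sinh s + c * cosh s + a) v = b * sinh v + c * cosh v := by
  have h1 (s : ℝ) : HasDerivAt (fun s => b * sinh s + c * cosh s + a) (b * cosh s + c * sinh s) s :=
    (((hasDerivAt_sinh s).const_mul b).add ((hasDerivAt_cosh s).const_mul c)).add_const a
  have h2 : HasDerivAt (fun s => b * cosh s + c * sinh s) (b * sinh v + c * cosh v) v :=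
    (((hasDerivAt_cosh v).const_mul b).add ((hasDerivAt_sinh v).const_mul c)).congr_deriv (by ring)
  rw [funext fun s => (h1 s).deriv, h2.deriv]

lemma laplacian_sinh_cosh_add_sin_cos (A B C D : ℝ) (F : ℝ → ℝ → ℝ)
    (hF : ∀ u v, F u v = A * sinh v + B * cosh v + (C * sin u + D * cos u)) (u v : ℝ) :
    -2 * deriv (fun t => deriv (fun t' => F t' v) t) u
        + 2 * deriv (fun t => deriv (fun t' => F u t') t) v = 2 * F u v := by
  simp only [hF, deriv_deriv_const_add_sin_cos, deriv_deriv_sinh_cosh_add_const]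
  ring

lemma prCliff_eq (u v : ℝ) :
    prCliff u v = (√2)⁻¹ • (cos u • Pi.single 1 1 + sin u • Pi.single 2 1
      + (cosh v • Pi.single 3 1 + sinh v • Pi.single 4 1)) := by
  rw [prCliff]
  congr 1
  ext i
  fin_cases i <;> simp

lemma prCliffU_eq (u v : ℝ) :
    prCliffU u v = (√2)⁻¹ • (-sin u • Pi.single 1 1 + cos u • Pi.single 2 1) := by
  have h : HasDerivAt (fun t => prCliff t v)
      ((√2)⁻¹ • (-sin u • Pi.single 1 1 + cos u • Pi.single 2 1)) u := by
    simp only [prCliff_eq]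
    exact ((((hasDerivAt_cos u).smul_const (Pi.single 1 1 : Fin 5 → ℝ)).add
      ((hasDerivAt_sin u).smul_const (Pi.single 2 1 : Fin 5 → ℝ))).add_const _).const_smul (√2)⁻¹
  exact h.deriv

lemma prCliffV_eq (u v : ℝ) :
    prCliffV u v = (√2)⁻¹ • (sinh v • Pi.single 3 1 + cosh v • Pi.single 4 1) := by
  have h : HasDerivAt (fun t => prCliff u t)
      ((√2)⁻¹ • (sinh v • Pi.single 3 1 + cosh v • Pi.single 4 1)) v := by
    simp only [prCliff_eq]
    exact ((((hasDerivAt_cosh v).smul_const (Pi.single 3 1 : Fin 5 → ℝ)).add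
      ((hasDerivAt_sinh v).smul_const (Pi.single 4 1 : Fin 5 → ℝ))).const_add _).const_smul (√2)⁻¹
  exact h.deriv

lemma prCliffGaussMap_eq (u v : ℝ) (i j k : Fin 5) :
    prCliffGaussMap u v i j k =
      (√2)⁻¹ * wedge3 (Pi.single 1 1) (Pi.single 2 1) (Pi.single 3 1) i j k * sinh v
        + (√2)⁻¹ * wedge3 (Pi.single 1 1) (Pi.single 2 1) (Pi.single 4 1) i j k * cosh v
        + ((√2)⁻¹ * wedge3 (Pi.single 3 1) (Pi.single 4 1) (Pi.single 1 1) i j k * sin u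
          + (√2)⁻¹ * wedge3 (Pi.single 4 1) (Pi.single 3 1) (Pi.single 2 1) i j k * cos u) := by
  have h2 : (√2)⁻¹ * (√2)⁻¹ = (2 : ℝ)⁻¹ := by rw [← mul_inv, mul_self_sqrt zero_le_two]
  change 2 * wedge3 (prCliff u v) (prCliffU u v) (prCliffV u v) i j k = _
  rw [prCliff_eq, prCliffU_eq, prCliffV_eq, wedge3_smul, wedge3_clifford_frame, h2]
  ring

/-- The pseudo-spherical Gauss map `ν̃ = r ∧ e₁ ∧ e₂` of the
pseudo-Riemannian Clifford torus in `S⁴₁(1) ⊂ E⁵₁` satisfies `Δν̃ = 2ν̃`, where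
`Δ = ε₁(∇_{e₁}e₁ − e₁e₁) + ε₂(∇_{e₂}e₂ − e₂e₂) = −2∂²/∂u² + 2∂²/∂v²` is the Laplace
operator of the induced flat Lorentzian metric `(1/2)(du² − dv²)`, acting componentwise. -/
theorem prCliffordTorus_gaussMap_one_type :
    ∀ (u v : ℝ) (i j k : Fin 5),
      (-2 : ℝ) * deriv (fun t => deriv (fun t' => prCliffGaussMap t' v i j k) t) u
          + 2 * deriv (fun t => deriv (fun t' => prCliffGaussMap u t' i j k) t) v
        = 2 * prCliffGaussMap u v i j k := by
  intro u v i j k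
  exact laplacian_sinh_cosh_add_sin_cos _ _ _ _ _ (fun u v => prCliffGaussMap_eq u v i j k) u v
end

section
/- Let M be an n-dimensional pseudo-Riemannian submanifold of S^{m-1}_s(1) with mean curvature vector Ĥ = ε_{n+1} α̂ e_{n+1} (α̂ ≠ 0, non-null) that is parallel in the normal connection, with flat normal connection, and suppose the second fundamental form satisfies h^r_{ik} = 0 for all r ≥ n+2 (so the first normal space is spanned by e_{n+1}). If the coefficients satisfy ε_i(‖ĥ‖² − λ_p) h^{n+1}_{ik} + n δ_{ik} α̂ = 0 for all i, k for some real λ_p, then λ_p = n + ‖ĥ‖², h^{n+1}_{ii} = ε_i α̂ for all i, and h^{n+1}_{ik} = 0 for i ≠ k; in particular M is totally umbilical and non-totally geodesic in S^{n+1}_{s*}(1). -/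
open scoped BigOperators

/-- the linear-algebraic core of the classification of submanifolds of a
pseudo-sphere with 1-type pseudo-spherical Gauss map with nonzero constant component.
Let `M` be an `n`-dimensional pseudo-Riemannian submanifold of `S^{m-1}_s(1)` whose mean
curvature vector `Ĥ = ε_{n+1} α̂ e_{n+1}` (`α̂ ≠ 0`, non-null) is parallel, whose normal
connection is flat, and whose second fundamental form satisfies `h^r_{ik} = 0` for all
`r ≥ n+2`, so that `‖ĥ‖² = Σ_{i,j} ε_{n+1}εᵢεⱼ h^{n+1}_{ij}h^{n+1}_{ji}`.
If `εᵢ(‖ĥ‖² − λ_p) h^{n+1}_{ik} + n δᵢₖ α̂ = 0` for all `i,k` and some real `λ_p`, then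
`λ_p = n + ‖ĥ‖²`, `h^{n+1}_{ii} = εᵢ α̂` for all `i`, and `h^{n+1}_{ik} = 0` for `i ≠ k`;
in particular `M` is totally umbilical and non-totally geodesic in `S^{n+1}_{s*}(1)`. -/
theorem one_type_with_constant_component_umbilicity
    (n : ℕ) (hn : 0 < n)
    (ε : Fin n → ℝ) (hε : ∀ i, ε i = 1 ∨ ε i = -1)
    (εN : ℝ) (hεN : εN = 1 ∨ εN = -1)
    (h : Fin n → Fin n → ℝ) (hsym : ∀ i k, h i k = h k i)
    (αhat : ℝ) (hα0 : αhat ≠ 0)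
    -- n α̂ = Σᵢ εᵢ h^{n+1}_{ii}
    (htr : (n : ℝ) * αhat = ∑ i : Fin n, ε i * h i i)
    (lam : ℝ)
    -- the system εᵢ(‖ĥ‖² − λ_p) h^{n+1}_{ik} + n δᵢₖ α̂ = 0
    (hsys : ∀ i k : Fin n,
      ε i * ((∑ i' : Fin n, ∑ j' : Fin n, εN * ε i' * ε j' * h i' j' * h j' i') - lam)
          * h i k + (n : ℝ) * (if i = k then (1 : ℝ) else 0) * αhat = 0) :
    lam = (n : ℝ) + (∑ i' : Fin n, ∑ j' : Fin n, εN * ε i' * ε j' * h i' j' * h j' i') ∧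
    (∀ i : Fin n, h i i = ε i * αhat) ∧
    (∀ i k : Fin n, i ≠ k → h i k = 0) := by

  set S := (∑ i' : Fin n, ∑ j' : Fin n, εN * ε i' * ε j' * h i' j' * h j' i') with hS
  have hε2 : ∀ i, ε i * ε i = 1 := by
    intro i; rcases hε i with h1 | h1 <;> rw [h1] <;> ring
  have hεne : ∀ i, ε i ≠ 0 := by
    intro i; rcases hε i with h1 | h1 <;> rw [h1] <;> norm_num
  have hnne : (n : ℝ) ≠ 0 := Nat.cast_ne_zero.mpr hn.ne'
  have hnα : (n:ℝ) * αhat ≠ 0 := mul_ne_zero hnne hα0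
  have hkey : S - lam ≠ 0 := by
    intro h0
    obtain ⟨i⟩ := Fin.pos_iff_nonempty.mp hn
    have h1 := hsys i i
    rw [if_pos rfl, h0, mul_zero, zero_mul, zero_add, mul_one] at h1
    exact hnα h1
  have hdiag : ∀ i, ε i * (S - lam) * h i i = -((n:ℝ) * αhat) := by
    intro i
    have h1 := hsys i i
    rw [if_pos rfl, mul_one] at h1
    linarith
  have hoff : ∀ i k, i ≠ k → h i k = 0 := by
    intro i k hik
    have h1 := hsys i k
    rw [if_neg hik, mul_zero, zero_mul, add_zero] at h1
    rcases mul_eq_zero.mp h1 with h3 | h3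
    · rcases mul_eq_zero.mp h3 with h4 | h4
      · exact absurd h4 (hεne i)
      · exact absurd h4 hkey
    · exact h3
  have hdiag' : ∀ i, (S - lam) * (ε i * h i i) = -((n:ℝ) * αhat) := by
    intro i; have := hdiag i; linarith [hdiag i]
  have htr2 : (S - lam) * ((n:ℝ) * αhat) = -((n:ℝ) * ((n:ℝ) * αhat)) := by
    calc (S - lam) * ((n:ℝ) * αhat) = ∑ i : Fin n, (S - lam) * (ε i * h i i) := by
          rw [htr, Finset.mul_sum]
      _ = ∑ i : Fin n, -((n:ℝ) * αhat) := Finset.sum_congr rfl (fun i _ => hdiag' i)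
      _ = -((n:ℝ) * ((n:ℝ) * αhat)) := by
          rw [Finset.sum_const]; simp [Finset.card_univ]
  have hSlam : S - lam = -(n:ℝ) := by
    have h2 : (S - lam) * ((n:ℝ) * αhat) = (-(n:ℝ)) * ((n:ℝ) * αhat) := by linarith
    rcases mul_eq_mul_right_iff.mp h2 with h1 | h1
    · exact h1
    · exact absurd h1 hnα
  refine ⟨by linarith, fun i => ?_, hoff⟩
  have h1 := hdiag i
  rw [hSlam] at h1
  have h2 : ε i * h i i = αhat := by
    have h3 : (ε i * h i i) * (n:ℝ) = αhat * (n:ℝ) := by linarith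
    rcases mul_eq_mul_right_iff.mp h3 with h4 | h4
    · exact h4
    · exact absurd h4 hnne
  calc h i i = (ε i * ε i) * h i i := by rw [hε2]; ring
    _ = ε i * αhat := by rw [mul_assoc, h2]
end
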